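/- Let U⁺ denote the subgroup of SL(2n,K) generated by all x_r(t₁,t₂) with r a positive root (r ∈ Φ⁺ = {L_i−L_j (i<j), L_i+L_j (i<j), 2L_i}) and (t₁,t₂) ∈ K², and let W denote the subgroup of SL(2n,K) generated by all w_γ(t₁,t₂) (γ = ±L_i±L_j, t₁,t₂ ∈ K nonzero, including the degenerate forms w_γ(t,0), w_γ(0,t)) and all w_{±2L_i}(t) (t ∈ K nonzero). Then every element g of SL(2n,K) can be written as g = u₁·w·u₂ with u₁, u₂ ∈ U⁺ and w ∈ W. -/

import Mathlib

/-!
Order the indices as `1 < ⋯ < n < 2n < ⋯ < n + 1` (the permutation `halfReversal`). In this order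
the entries of the positive root elements `x_r(t₁, t₂)` sit exactly above the diagonal, and with
one parameter zero they are single transvections; likewise the `w_r` with one parameter zero are
the elements `w_{kl}(t) = x_{kl}(t) x_{lk}(-t⁻¹) x_{kl}(t)` of `SL(2n)`, for every `k ≠ l`. So it
suffices to prove the Bruhat decomposition of `SL(m)` over a field:

* Eliminating column by column, with the lowest nonzero entry of the column as pivot, one clears
  the column above the pivot by adding multiples of the pivot row to higher rows and the pivot row
  to the right by adding multiples of the pivot column to later columns. Both are upper
  unitriangular operations, and they end in a monomial matrix.
* `w_{kl}(1)` swaps two rows up to a sign, which reduces a monomial matrix of determinant `1` to a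
  diagonal one, and `w_{kl}(t) w_{kl}(-1) = diag(…, t, …, t⁻¹, …)` generates the diagonal matrices
  of determinant `1`.
-/

open Matrix

noncomputable section

/- Throughout, `K` is ℝ or ℂ, encoded by the `RCLike` class. -/

/-- 2n×2n matrices over K. -/
abbrev MK (n : ℕ) (K : Type) [RCLike K] : Type := Matrix (Fin (2 * n)) (Fin (2 * n)) K

/-- `EK n K k l` is the elementary matrix with (k,l) entry 1 and all other entries 0. -/
def EK (n : ℕ) (K : Type) [RCLike K] (k l : Fin (2 * n)) : MK n K :=
  Matrix.single k l 1

/-- the index `i` (1 ≤ i ≤ n, 0-based) inside {1,…,2n}. -/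
def lo {n : ℕ} (i : Fin n) : Fin (2 * n) := ⟨i.1, by have := i.isLt; omega⟩

/-- the index `i + n` (1 ≤ i ≤ n, 0-based) inside {1,…,2n}. -/
def hi {n : ℕ} (i : Fin n) : Fin (2 * n) := ⟨n + i.1, by have := i.isLt; omega⟩

/-- x_{L_i-L_j}(t₁,t₂) = I + (t₁ e_{i,j} + t₂ e_{j+n,i+n}),  i ≠ j. -/
def xpm (n : ℕ) (K : Type) [RCLike K] (i j : Fin n) (t₁ t₂ : K) : MK n K :=
  1 + (t₁ • EK n K (lo i) (lo j) + t₂ • EK n K (hi j) (hi i))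

/-- x_{L_i+L_j}(t₁,t₂) = I + (t₁ e_{i,j+n} + t₂ e_{j,i+n}),  i < j. -/
def xpp (n : ℕ) (K : Type) [RCLike K] (i j : Fin n) (t₁ t₂ : K) : MK n K :=
  1 + (t₁ • EK n K (lo i) (hi j) + t₂ • EK n K (lo j) (hi i))

/-- x_{-L_i-L_j}(t₁,t₂) = I + (t₁ e_{j+n,i} + t₂ e_{i+n,j}),  i < j. -/
def xmm (n : ℕ) (K : Type) [RCLike K] (i j : Fin n) (t₁ t₂ : K) : MK n K :=
  1 + (t₁ • EK n K (hi j) (lo i) + t₂ • EK n K (hi i) (lo j))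

/-- x_{2L_i}(t) = I + t e_{i,i+n}. -/
def x2 (n : ℕ) (K : Type) [RCLike K] (i : Fin n) (t : K) : MK n K :=
  1 + t • EK n K (lo i) (hi i)

/-- x_{-2L_i}(t) = I + t e_{i+n,i}. -/
def xm2 (n : ℕ) (K : Type) [RCLike K] (i : Fin n) (t : K) : MK n K :=
  1 + t • EK n K (hi i) (lo i)

/-- w_{L_i-L_j}(t₁,t₂) = x_{L_i-L_j}(t₁,t₂) x_{L_j-L_i}(-t₁⁻¹,-t₂⁻¹) x_{L_i-L_j}(t₁,t₂).
(Since 0⁻¹ = 0 in Lean, the degenerate forms w(t,0) and w(0,t) are special cases.) -/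
def wpm (n : ℕ) (K : Type) [RCLike K] (i j : Fin n) (t₁ t₂ : K) : MK n K :=
  xpm n K i j t₁ t₂ * xpm n K j i (-t₁⁻¹) (-t₂⁻¹) * xpm n K i j t₁ t₂

/-- w_{L_i+L_j}(t₁,t₂). -/
def wpp (n : ℕ) (K : Type) [RCLike K] (i j : Fin n) (t₁ t₂ : K) : MK n K :=
  xpp n K i j t₁ t₂ * xmm n K i j (-t₁⁻¹) (-t₂⁻¹) * xpp n K i j t₁ t₂

/-- w_{-L_i-L_j}(t₁,t₂). -/
def wmm (n : ℕ) (K : Type) [RCLike K] (i j : Fin n) (t₁ t₂ : K) : MK n K :=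
  xmm n K i j t₁ t₂ * xpp n K i j (-t₁⁻¹) (-t₂⁻¹) * xmm n K i j t₁ t₂

/-- w_{2L_i}(t) = x_{2L_i}(t) x_{-2L_i}(-t⁻¹) x_{2L_i}(t). -/
def w2 (n : ℕ) (K : Type) [RCLike K] (i : Fin n) (t : K) : MK n K :=
  x2 n K i t * xm2 n K i (-t⁻¹) * x2 n K i t

/-- w_{-2L_i}(t) = x_{-2L_i}(t) x_{2L_i}(-t⁻¹) x_{-2L_i}(t). -/
def wm2 (n : ℕ) (K : Type) [RCLike K] (i : Fin n) (t : K) : MK n K :=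
  xm2 n K i t * x2 n K i (-t⁻¹) * xm2 n K i t

/-- The generators of U⁺: all x_r(t₁,t₂) with r a positive root
(r ∈ Φ⁺ = {L_i−L_j (i<j), L_i+L_j (i<j), 2L_i}), viewed inside the units of the
matrix ring (so that SL(2n,K) sits inside as the units of determinant 1). -/
def genU (n : ℕ) (K : Type) [RCLike K] : Set (Matrix (Fin (2 * n)) (Fin (2 * n)) K)ˣ :=
  {u | (∃ i j : Fin n, i < j ∧ ∃ t₁ t₂ : K,
          (u : Matrix (Fin (2 * n)) (Fin (2 * n)) K) = xpm n K i j t₁ t₂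
            ∨ (u : Matrix (Fin (2 * n)) (Fin (2 * n)) K) = xpp n K i j t₁ t₂)
      ∨ (∃ i : Fin n, ∃ t : K,
          (u : Matrix (Fin (2 * n)) (Fin (2 * n)) K) = x2 n K i t)}

/-- The generators of W: all w_γ(t₁,t₂) for γ = ±L_i±L_j with t₁,t₂ nonzero,
including the degenerate forms w_γ(t,0), w_γ(0,t), and all w_{±2L_i}(t), t ≠ 0. -/
def genW (n : ℕ) (K : Type) [RCLike K] : Set (Matrix (Fin (2 * n)) (Fin (2 * n)) K)ˣ :=
  {u | (∃ i j : Fin n, i ≠ j ∧ ∃ t₁ t₂ : K, (t₁ ≠ 0 ∨ t₂ ≠ 0) ∧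
          ((u : Matrix (Fin (2 * n)) (Fin (2 * n)) K) = wpm n K i j t₁ t₂
            ∨ (i < j ∧
                ((u : Matrix (Fin (2 * n)) (Fin (2 * n)) K) = wpp n K i j t₁ t₂
                  ∨ (u : Matrix (Fin (2 * n)) (Fin (2 * n)) K) = wmm n K i j t₁ t₂))))
      ∨ (∃ i : Fin n, ∃ t : K, t ≠ 0 ∧
          ((u : Matrix (Fin (2 * n)) (Fin (2 * n)) K) = w2 n K i t
            ∨ (u : Matrix (Fin (2 * n)) (Fin (2 * n)) K) = wm2 n K i t))}

def monomialMatrix {ι F : Type*} [DecidableEq ι] [Zero F] (τ : Equiv.Perm ι) (d : ι → F) :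
    Matrix ι ι F :=
  of fun i j => if i = τ j then d j else 0

section UpperUnipotent

variable {ι R : Type*} [Fintype ι] [LinearOrder ι] [CommRing R]

variable (ι R) in
def upperUnipotent : Submonoid (Matrix ι ι R) :=
  Submonoid.closure {A | ∃ i j t, i < j ∧ A = transvection i j t}

lemma det_eq_one_of_mem_upperUnipotent {A : Matrix ι ι R} (hA : A ∈ upperUnipotent ι R) :
    A.det = 1 := by
  induction hA using Submonoid.closure_induction with
  | one => exact det_one
  | mem A hA =>
    obtain ⟨i, j, t, hij, rfl⟩ := hA
    exact det_transvection_of_ne _ _ hij.ne _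
  | mul A B _ _ hA hB => rw [det_mul, hA, hB, one_mul]

def upperCol (k : ι) (c : ι → R) : Matrix ι ι R :=
  1 + ∑ i ∈ {i | i < k}, single i k (c i)

def upperRow (k : ι) (r : ι → R) : Matrix ι ι R :=
  1 + ∑ j ∈ {j | k < j}, single k j (r j)

lemma one_add_sum_single_col_mem {k : ι} (c : ι → R) {s : Finset ι} (hs : ∀ i ∈ s, i < k) :
    1 + ∑ i ∈ s, single i k (c i) ∈ upperUnipotent ι R := by
  induction s using Finset.induction_on with
  | empty => simp [one_mem]
  | insert a s ha ih =>
    have hak := hs a (Finset.mem_insert_self a s)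
    have hsk : ∀ i ∈ s, i < k := fun i hi => hs i (Finset.mem_insert_of_mem hi)
    have hprod : single a k (c a) * ∑ i ∈ s, single i k (c i) = 0 := by
      rw [Finset.mul_sum]
      exact Finset.sum_eq_zero fun i hi => single_mul_single_of_ne _ _ _ _ (hsk i hi).ne' _
    have : 1 + ∑ i ∈ insert a s, single i k (c i)
        = transvection a k (c a) * (1 + ∑ i ∈ s, single i k (c i)) := by
      rw [Finset.sum_insert ha, transvection, add_mul, one_mul, mul_add, mul_one, hprod]
      abel
    rw [this]
    exact mul_mem (Submonoid.subset_closure ⟨a, k, c a, hak, rfl⟩) (ih hsk)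

lemma one_add_sum_single_row_mem {k : ι} (r : ι → R) {s : Finset ι} (hs : ∀ j ∈ s, k < j) :
    1 + ∑ j ∈ s, single k j (r j) ∈ upperUnipotent ι R := by
  induction s using Finset.induction_on with
  | empty => simp [one_mem]
  | insert a s ha ih =>
    have hka := hs a (Finset.mem_insert_self a s)
    have hsk : ∀ j ∈ s, k < j := fun j hj => hs j (Finset.mem_insert_of_mem hj)
    have hprod : (∑ j ∈ s, single k j (r j)) * single k a (r a) = 0 := by
      rw [Finset.sum_mul]
      exact Finset.sum_eq_zero fun j hj => single_mul_single_of_ne _ _ _ _ (hsk j hj).ne' _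
    have : 1 + ∑ j ∈ insert a s, single k j (r j)
        = (1 + ∑ j ∈ s, single k j (r j)) * transvection k a (r a) := by
      rw [Finset.sum_insert ha, transvection, mul_add, mul_one, add_mul, one_mul, hprod]
      abel
    rw [this]
    exact mul_mem (ih hsk) (Submonoid.subset_closure ⟨k, a, r a, hka, rfl⟩)

lemma upperCol_mem (k : ι) (c : ι → R) : upperCol k c ∈ upperUnipotent ι R :=
  one_add_sum_single_col_mem c fun i hi => by simpa using hi

lemma upperRow_mem (k : ι) (r : ι → R) : upperRow k r ∈ upperUnipotent ι R :=
  one_add_sum_single_row_mem r fun j hj => by simpa using hj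

lemma upperCol_mul_apply (k : ι) (c : ι → R) (M : Matrix ι ι R) (i j : ι) :
    (upperCol k c * M) i j = M i j + if i < k then c i * M k j else 0 := by
  rw [upperCol, add_mul, one_mul, Matrix.add_apply, Finset.sum_mul, Matrix.sum_apply]
  congr 1
  split_ifs with h
  · rw [Finset.sum_eq_single i (fun b _ hb => single_mul_apply_of_ne _ _ _ _ _ hb.symm _)
      (by simp [h]), single_mul_apply_same]
  · exact Finset.sum_eq_zero fun b hb =>
      single_mul_apply_of_ne _ _ _ _ _ (by rintro rfl; exact h (by simpa using hb)) _

lemma mul_upperRow_apply (k : ι) (r : ι → R) (M : Matrix ι ι R) (i j : ι) :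
    (M * upperRow k r) i j = M i j + if k < j then M i k * r j else 0 := by
  rw [upperRow, mul_add, mul_one, Matrix.add_apply, Finset.mul_sum, Matrix.sum_apply]
  congr 1
  split_ifs with h
  · rw [Finset.sum_eq_single j (fun b _ hb => mul_single_apply_of_ne _ _ _ _ _ hb.symm _)
      (by simp [h]), mul_single_apply_same]
  · exact Finset.sum_eq_zero fun b hb =>
      mul_single_apply_of_ne _ _ _ _ _ (by rintro rfl; exact h (by simpa using hb)) _

end UpperUnipotent

section Pivot

variable {ι R : Type*} [LinearOrder ι] [Zero R]

-- Only the part of row `k` to the right of column `j` is cleared: that is all that upper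
-- unitriangular column operations can reach, and it already makes the pivot rows distinct.
def IsPivot (N : Matrix ι ι R) (k j : ι) : Prop :=
  N k j ≠ 0 ∧ (∀ i, i ≠ k → N i j = 0) ∧ ∀ j', j < j' → N k j' = 0

lemma IsPivot.congr {N N' : Matrix ι ι R} {k j : ι} (h : IsPivot N k j)
    (hcol : ∀ i, N' i j = N i j) (hrow : ∀ j', N' k j' = N k j') : IsPivot N' k j :=
  ⟨hcol k ▸ h.1, fun i hi => hcol i ▸ h.2.1 i hi, fun j' hj' => hrow j' ▸ h.2.2 j' hj'⟩

lemma exists_eq_monomialMatrix_of_isPivot [Finite ι] {N : Matrix ι ι R} {κ : ι → ι}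
    (h : ∀ j, IsPivot N (κ j) j) : ∃ τ : Equiv.Perm ι, ∃ d, N = monomialMatrix τ d := by
  have hinj : Function.Injective κ := by
    intro j j' hjj'
    by_contra hne
    rcases lt_or_gt_of_ne hne with hlt | hlt
    · exact (h j').1 (hjj' ▸ (h j).2.2 j' hlt)
    · exact (h j).1 (hjj'.symm ▸ (h j').2.2 j hlt)
  refine ⟨Equiv.ofBijective κ (Finite.injective_iff_bijective.1 hinj), fun j => N (κ j) j, ?_⟩
  ext i j
  by_cases hi : i = κ j
  · simp [monomialMatrix, hi]
  · simp [monomialMatrix, hi, (h j).2.1 i hi]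

end Pivot

section Bruhat

variable {ι F : Type*} [Fintype ι] [LinearOrder ι] [Field F]

lemma exists_lowest_ne_zero {R : Type*} [CommRing R] {N : Matrix ι ι R} (hN : N.det ≠ 0)
    (j : ι) :
    ∃ k, N k j ≠ 0 ∧ ∀ i, k < i → N i j = 0 := by
  classical
  obtain ⟨i, hi⟩ : ∃ i, N i j ≠ 0 := by
    by_contra! h
    exact hN (det_eq_zero_of_column_eq_zero j h)
  obtain ⟨k, hk, hmax⟩ :=
    Finset.exists_max_image {i | N i j ≠ 0} id ⟨i, by simpa using hi⟩
  refine ⟨k, by simpa using hk, fun i hki => ?_⟩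
  by_contra h
  exact (hmax i (by simpa using h)).not_gt hki

lemma exists_isPivot_insert {N : Matrix ι ι F} (hN : N.det ≠ 0) {a : ι} {s : Finset ι}
    (hs : ∀ j ∈ s, j < a) (hpiv : ∀ j ∈ s, ∃ k, IsPivot N k j) :
    ∃ L ∈ upperUnipotent ι F, ∃ R ∈ upperUnipotent ι F,
      ∀ j ∈ insert a s, ∃ k, IsPivot (L * N * R) k j := by
  obtain ⟨k, hk, hbelow⟩ := exists_lowest_ne_zero hN a
  set p := N k a
  set L := upperCol k (fun i => -N i a / p)
  set N₁ := L * N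
  have hN₁ (i j : ι) : N₁ i j = N i j + if i < k then -N i a / p * N k j else 0 :=
    upperCol_mul_apply _ _ _ _ _
  have hcol₁ (i : ι) : N₁ i a = if i = k then p else 0 := by
    rw [hN₁]
    rcases lt_trichotomy i k with h | rfl | h
    · simp [h, h.ne]
      field_simp
      ring
    · simp [p]
    · simp [h.not_gt, h.ne', hbelow i h]
  set R := upperRow a (fun j => -N₁ k j / p)
  have hN₂ (i j : ι) :
      (N₁ * R) i j = N₁ i j + if a < j then N₁ i a * (-N₁ k j / p) else 0 :=
    mul_upperRow_apply _ _ _ _ _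
  refine ⟨L, upperCol_mem _ _, R, upperRow_mem _ _, fun j hj => ?_⟩
  change ∃ k, IsPivot (N₁ * R) k j
  rcases Finset.mem_insert.1 hj with rfl | hj
  · refine ⟨k, ?_, fun i hi => ?_, fun j' hj' => ?_⟩
    · simpa [hN₂, hcol₁] using hk
    · simp [hN₂, hcol₁, hi]
    · rw [hN₂, hcol₁, if_pos rfl, if_pos hj']
      field_simp
      ring
  · obtain ⟨kj, hkj⟩ := hpiv j hj
    have hkjk : kj ≠ k := by
      rintro rfl
      exact hk (hkj.2.2 a (hs j hj))
    have hNkj : N k j = 0 := hkj.2.1 k hkjk.symm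
    refine ⟨kj, hkj.congr (fun i => ?_) (fun j' => ?_)⟩
    · simp [hN₂, hN₁, hNkj, (hs j hj).not_gt]
    · simp [hN₂, hN₁, hkj.2.2 a (hs j hj)]

theorem exists_mul_mul_eq_monomialMatrix {M : Matrix ι ι F} (hM : M.det ≠ 0) :
    ∃ u₁ ∈ upperUnipotent ι F, ∃ u₂ ∈ upperUnipotent ι F,
      ∃ τ : Equiv.Perm ι, ∃ d, u₁ * M * u₂ = monomialMatrix τ d := by
  suffices ∀ s : Finset ι, ∃ u₁ ∈ upperUnipotent ι F, ∃ u₂ ∈ upperUnipotent ι F,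
      ∀ j ∈ s, ∃ k, IsPivot (u₁ * M * u₂) k j by
    obtain ⟨u₁, hu₁, u₂, hu₂, hpiv⟩ := this Finset.univ
    choose κ hκ using fun j => hpiv j (Finset.mem_univ j)
    exact ⟨u₁, hu₁, u₂, hu₂, exists_eq_monomialMatrix_of_isPivot hκ⟩
  intro s
  induction s using Finset.induction_on_max with
  | empty => exact ⟨1, one_mem _, 1, one_mem _, by simp⟩
  | insert a s hs ih =>
    obtain ⟨u₁, hu₁, u₂, hu₂, hpiv⟩ := ih
    have hdet : (u₁ * M * u₂).det ≠ 0 := by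
      rwa [det_mul, det_mul, det_eq_one_of_mem_upperUnipotent hu₁,
        det_eq_one_of_mem_upperUnipotent hu₂, one_mul, mul_one]
    obtain ⟨L, hL, R, hR, hpiv'⟩ := exists_isPivot_insert hdet hs hpiv
    refine ⟨L * u₁, mul_mem hL hu₁, u₂ * R, mul_mem hu₂ hR, ?_⟩
    simpa only [Matrix.mul_assoc] using hpiv'

end Bruhat

section Weyl

variable {ι F : Type*} [Fintype ι] [DecidableEq ι] [Field F]

def weylMatrix (i j : ι) (t : F) : Matrix ι ι F :=
  transvection i j t * transvection j i (-t⁻¹) * transvection i j t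

variable (ι F) in
def weylSubmonoid : Submonoid (Matrix ι ι F) :=
  Submonoid.closure {A | ∃ i j t, i ≠ j ∧ t ≠ 0 ∧ A = weylMatrix i j t}

lemma weylMatrix_mul_apply {i j : ι} (hij : i ≠ j) {t : F} (ht : t ≠ 0) (M : Matrix ι ι F)
    (a b : ι) : (weylMatrix i j t * M) a b =
      if a = i then t * M j b else if a = j then -t⁻¹ * M i b else M a b := by
  rw [weylMatrix, Matrix.mul_assoc, Matrix.mul_assoc]
  by_cases hai : a = i
  · subst hai
    simp [transvection_mul_apply_same, transvection_mul_apply_of_ne, hij, hij.symm]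
    field_simp
    ring
  by_cases haj : a = j
  · subst haj
    simp [transvection_mul_apply_same, transvection_mul_apply_of_ne, hij.symm]
    field_simp
    ring
  simp [transvection_mul_apply_of_ne, hai, haj]

lemma weylMatrix_apply {i j : ι} (hij : i ≠ j) {t : F} (ht : t ≠ 0) (a b : ι) :
    weylMatrix i j t a b =
      if a = i then (if j = b then t else 0) else if a = j then (if i = b then -t⁻¹ else 0)
        else (if a = b then 1 else 0) := by
  simpa [one_apply] using weylMatrix_mul_apply hij ht 1 a b

lemma det_weylMatrix {i j : ι} (hij : i ≠ j) (t : F) : (weylMatrix i j t).det = 1 := by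
  simp [weylMatrix, det_transvection_of_ne _ _ hij, det_transvection_of_ne _ _ hij.symm]

lemma weylMatrix_one_mul_monomialMatrix {x y : ι} (hxy : x ≠ y) (τ : Equiv.Perm ι)
    (d : ι → F) :
    weylMatrix x y 1 * monomialMatrix τ d =
      monomialMatrix (Equiv.swap x y * τ) (fun b => if τ b = x then -d b else d b) := by
  ext a b
  rw [weylMatrix_mul_apply hxy one_ne_zero]
  simp only [monomialMatrix, of_apply, Equiv.Perm.mul_apply, Equiv.swap_apply_def]
  grind

lemma weylMatrix_mul_weylMatrix_neg_one {i j : ι} (hij : i ≠ j) {t : F} (ht : t ≠ 0) :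
    weylMatrix i j t * weylMatrix i j (-1) =
      diagonal (Pi.mulSingle i t * Pi.mulSingle j t⁻¹) := by
  have h1 : (-1 : F) ≠ 0 := neg_ne_zero.2 one_ne_zero
  ext a b
  rw [weylMatrix_mul_apply hij ht, weylMatrix_apply hij h1, weylMatrix_apply hij h1,
    weylMatrix_apply hij h1]
  simp only [diagonal_apply, Pi.mul_apply, Pi.mulSingle_apply]
  grind

lemma diagonal_mulSingle_mul_mulSingle_inv_mem (i j : ι) {t : F} (ht : t ≠ 0) :
    diagonal (Pi.mulSingle i t * Pi.mulSingle j t⁻¹) ∈ weylSubmonoid ι F := by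
  by_cases hij : i = j
  · subst hij
    simp [← Pi.mulSingle_mul, ht, one_mem]
  · rw [← weylMatrix_mul_weylMatrix_neg_one hij ht]
    exact mul_mem (Submonoid.subset_closure ⟨i, j, t, hij, ht, rfl⟩)
      (Submonoid.subset_closure ⟨i, j, -1, hij, by norm_num, rfl⟩)

lemma diagonal_mem_weylSubmonoid {d : ι → F} (hd : ∏ i, d i = 1) :
    diagonal d ∈ weylSubmonoid ι F := by
  rcases isEmpty_or_nonempty ι with hι | ⟨⟨i₀⟩⟩
  · simp [Subsingleton.elim (diagonal d) 1, one_mem]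
  have hd0 (i : ι) : d i ≠ 0 := fun h0 => by
    simp [Finset.prod_eq_zero (Finset.mem_univ i) h0] at hd
  have hprod : ∏ i, (Pi.mulSingle i (d i) * Pi.mulSingle i₀ (d i)⁻¹) = d := by
    have hcomp : ∏ i, Pi.mulSingle (M := fun _ => F) i₀ (d i)⁻¹ = 1 := by
      ext k
      rw [Finset.prod_apply]
      by_cases hk : k = i₀
      · simp [hk, Finset.prod_inv_distrib, hd]
      · simp [hk]
    rw [Finset.prod_mul_distrib, Finset.univ_prod_mulSingle, hcomp, mul_one]
  rw [← hprod]
  exact Submonoid.prod_mem ((weylSubmonoid ι F).comap (diagonalRingHom ι F).toMonoidHom)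
    fun i _ => diagonal_mulSingle_mul_mulSingle_inv_mem i i₀ (hd0 i)

lemma monomialMatrix_mem_weylSubmonoid (τ : Equiv.Perm ι) {d : ι → F}
    (hdet : (monomialMatrix τ d).det = 1) : monomialMatrix τ d ∈ weylSubmonoid ι F := by
  induction τ using Equiv.Perm.swap_induction_on generalizing d with
  | one =>
    have hdiag : monomialMatrix 1 d = diagonal d := by
      ext i j
      by_cases h : i = j <;> simp [monomialMatrix, h]
    rw [hdiag, det_diagonal] at hdet
    rw [hdiag]
    exact diagonal_mem_weylSubmonoid hdet
  | swap_mul τ x y hxy ih =>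
    set d' : ι → F := fun b => if τ b = x then -d b else d b
    have hd : (fun b => if τ b = x then -d' b else d' b) = d := by
      ext b
      by_cases h : τ b = x <;> simp [d', h]
    rw [← hd, ← weylMatrix_one_mul_monomialMatrix hxy] at hdet ⊢
    rw [det_mul, det_weylMatrix hxy, one_mul] at hdet
    exact mul_mem (Submonoid.subset_closure ⟨x, y, 1, hxy, one_ne_zero, rfl⟩) (ih hdet)

end Weyl

lemma reindex_transvection {ι κ R : Type*} [Fintype ι] [Fintype κ] [DecidableEq ι]
    [DecidableEq κ] [CommRing R] (e : ι ≃ κ) (i j : ι) (c : R) :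
    reindexAlgEquiv R R e (transvection i j c) = transvection (e i) (e j) c := by
  ext a b
  simp [transvection, single_apply, one_apply, Equiv.eq_symm_apply, eq_comm]

lemma reindex_weylMatrix {ι κ F : Type*} [Fintype ι] [Fintype κ] [DecidableEq ι]
    [DecidableEq κ] [Field F] (e : ι ≃ κ) (i j : ι) (t : F) :
    reindexAlgEquiv F F e (weylMatrix i j t) = weylMatrix (e i) (e j) t := by
  simp only [weylMatrix, map_mul, reindex_transvection]

lemma exists_mem_closure_val_eq {M N G : Type*} [Monoid M] [Monoid N] [FunLike G M N]
    [MonoidHomClass G M N] (f : G) {S : Set M} {T : Set Nˣ} (hST : f '' S ⊆ Units.val '' T)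
    {x : M} (hx : x ∈ Submonoid.closure S) : ∃ u ∈ Subgroup.closure T, (u : N) = f x := by
  have : (Submonoid.closure S).map f ≤ (Subgroup.closure T).toSubmonoid.map (Units.coeHom N) := by
    rw [MonoidHom.map_mclosure, Submonoid.closure_le]
    exact hST.trans (Set.image_mono Subgroup.subset_closure)
  exact this (Submonoid.mem_map_of_mem f hx)

section RootElements

variable {n : ℕ} {K : Type} [RCLike K]

def finSumFinTwoMul (n : ℕ) : Fin n ⊕ Fin n ≃ Fin (2 * n) :=
  finSumFinEquiv.trans (finCongr (two_mul n).symm)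

lemma finSumFinTwoMul_inl (i : Fin n) : finSumFinTwoMul n (.inl i) = lo i := rfl

lemma finSumFinTwoMul_inr (i : Fin n) : finSumFinTwoMul n (.inr i) = hi i := rfl

lemma lo_or_hi (k : Fin (2 * n)) : (∃ i, k = lo i) ∨ ∃ i, k = hi i := by
  rcases h : (finSumFinTwoMul n).symm k with i | i
  · exact .inl ⟨i, by rw [← finSumFinTwoMul_inl, ← h, Equiv.apply_symm_apply]⟩
  · exact .inr ⟨i, by rw [← finSumFinTwoMul_inr, ← h, Equiv.apply_symm_apply]⟩

lemma lo_lt_lo_iff {i j : Fin n} : lo i < lo j ↔ i < j := Fin.lt_def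

lemma hi_lt_hi_iff {i j : Fin n} : hi i < hi j ↔ i < j := by
  rw [hi, hi, Fin.mk_lt_mk, Fin.lt_def]
  omega

lemma lo_lt_hi (i j : Fin n) : lo i < hi j :=
  Fin.mk_lt_mk.2 (by omega)

lemma lo_injective : Function.Injective (lo : Fin n → Fin (2 * n)) := fun i j h => by
  simpa [lo, Fin.ext_iff] using h

lemma hi_injective : Function.Injective (hi : Fin n → Fin (2 * n)) := fun i j h => by
  simpa [hi, Fin.ext_iff] using h

def halfReversal (n : ℕ) : Equiv.Perm (Fin (2 * n)) :=
  (finSumFinTwoMul n).permCongr ((Equiv.refl _).sumCongr Fin.revPerm)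

lemma halfReversal_lo (i : Fin n) : halfReversal n (lo i) = lo i := by
  simp [halfReversal, Equiv.permCongr_apply, ← finSumFinTwoMul_inl]

lemma halfReversal_hi (i : Fin n) : halfReversal n (hi i) = hi i.rev := by
  simp [halfReversal, Equiv.permCongr_apply, ← finSumFinTwoMul_inr]

lemma xpm_zero_right (i j : Fin n) (t : K) : xpm n K i j t 0 = transvection (lo i) (lo j) t := by
  simp [xpm, EK, transvection, smul_single]

lemma xpm_zero_left (i j : Fin n) (t : K) : xpm n K i j 0 t = transvection (hi j) (hi i) t := by
  simp [xpm, EK, transvection, smul_single]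

lemma xpp_zero_right (i j : Fin n) (t : K) : xpp n K i j t 0 = transvection (lo i) (hi j) t := by
  simp [xpp, EK, transvection, smul_single]

lemma xpp_zero_left (i j : Fin n) (t : K) : xpp n K i j 0 t = transvection (lo j) (hi i) t := by
  simp [xpp, EK, transvection, smul_single]

lemma xmm_zero_right (i j : Fin n) (t : K) : xmm n K i j t 0 = transvection (hi j) (lo i) t := by
  simp [xmm, EK, transvection, smul_single]

lemma xmm_zero_left (i j : Fin n) (t : K) : xmm n K i j 0 t = transvection (hi i) (lo j) t := by
  simp [xmm, EK, transvection, smul_single]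

lemma x2_eq_transvection (i : Fin n) (t : K) : x2 n K i t = transvection (lo i) (hi i) t := by
  simp [x2, EK, transvection, smul_single]

lemma xm2_eq_transvection (i : Fin n) (t : K) : xm2 n K i t = transvection (hi i) (lo i) t := by
  simp [xm2, EK, transvection, smul_single]

lemma wpm_zero_right (i j : Fin n) (t : K) : wpm n K i j t 0 = weylMatrix (lo i) (lo j) t := by
  simp [wpm, xpm_zero_right, weylMatrix]

lemma wpm_zero_left (i j : Fin n) (t : K) : wpm n K i j 0 t = weylMatrix (hi j) (hi i) t := by
  simp [wpm, xpm_zero_left, weylMatrix]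

lemma wpp_zero_right (i j : Fin n) (t : K) : wpp n K i j t 0 = weylMatrix (lo i) (hi j) t := by
  simp [wpp, xpp_zero_right, xmm_zero_right, weylMatrix]

lemma wpp_zero_left (i j : Fin n) (t : K) : wpp n K i j 0 t = weylMatrix (lo j) (hi i) t := by
  simp [wpp, xpp_zero_left, xmm_zero_left, weylMatrix]

lemma wmm_zero_right (i j : Fin n) (t : K) : wmm n K i j t 0 = weylMatrix (hi j) (lo i) t := by
  simp [wmm, xmm_zero_right, xpp_zero_right, weylMatrix]

lemma wmm_zero_left (i j : Fin n) (t : K) : wmm n K i j 0 t = weylMatrix (hi i) (lo j) t := by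
  simp [wmm, xmm_zero_left, xpp_zero_left, weylMatrix]

lemma w2_eq_weylMatrix (i : Fin n) (t : K) : w2 n K i t = weylMatrix (lo i) (hi i) t := by
  simp [w2, x2_eq_transvection, xm2_eq_transvection, weylMatrix]

lemma wm2_eq_weylMatrix (i : Fin n) (t : K) : wm2 n K i t = weylMatrix (hi i) (lo i) t := by
  simp [wm2, x2_eq_transvection, xm2_eq_transvection, weylMatrix]

lemma transvection_halfReversal_mem_genU {k l : Fin (2 * n)} (hkl : k < l) (t : K) :
    transvection (halfReversal n k) (halfReversal n l) t ∈ Units.val '' genU n K := by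
  have hu : IsUnit (transvection (halfReversal n k) (halfReversal n l) t) :=
    (isUnit_iff_isUnit_det _).2 (by
      simp [det_transvection_of_ne _ _ ((halfReversal n).injective.ne hkl.ne)])
  refine ⟨hu.unit, ?_, hu.unit_spec⟩
  simp only [genU, Set.mem_ofPred_eq, hu.unit_spec]
  rcases lo_or_hi k with ⟨a, rfl⟩ | ⟨a, rfl⟩ <;>
    rcases lo_or_hi l with ⟨b, rfl⟩ | ⟨b, rfl⟩
  · rw [halfReversal_lo, halfReversal_lo]
    exact .inl ⟨a, b, lo_lt_lo_iff.1 hkl, t, 0, .inl (xpm_zero_right a b t).symm⟩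
  · rw [halfReversal_lo, halfReversal_hi]
    rcases lt_trichotomy a b.rev with h | h | h
    · exact .inl ⟨a, b.rev, h, t, 0, .inr (xpp_zero_right a b.rev t).symm⟩
    · rw [← h]
      exact .inr ⟨a, t, (x2_eq_transvection a t).symm⟩
    · exact .inl ⟨b.rev, a, h, 0, t, .inr (xpp_zero_left b.rev a t).symm⟩
  · exact absurd hkl (lo_lt_hi b a).not_gt
  · rw [halfReversal_hi, halfReversal_hi]
    exact .inl ⟨b.rev, a.rev, Fin.rev_lt_rev.2 (hi_lt_hi_iff.1 hkl), 0, t,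
      .inl (xpm_zero_left b.rev a.rev t).symm⟩

lemma weylMatrix_mem_genW {k l : Fin (2 * n)} (hkl : k ≠ l) {t : K} (ht : t ≠ 0) :
    weylMatrix k l t ∈ Units.val '' genW n K := by
  have hu : IsUnit (weylMatrix k l t) :=
    (isUnit_iff_isUnit_det _).2 (by simp [det_weylMatrix hkl])
  refine ⟨hu.unit, ?_, hu.unit_spec⟩
  simp only [genW, Set.mem_ofPred_eq, hu.unit_spec]
  rcases lo_or_hi k with ⟨a, rfl⟩ | ⟨a, rfl⟩ <;>
    rcases lo_or_hi l with ⟨b, rfl⟩ | ⟨b, rfl⟩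
  · exact .inl ⟨a, b, lo_injective.ne_iff.1 hkl, t, 0, .inl ht,
      .inl (wpm_zero_right a b t).symm⟩
  · rcases lt_trichotomy a b with h | rfl | h
    · exact .inl ⟨a, b, h.ne, t, 0, .inl ht, .inr ⟨h, .inl (wpp_zero_right a b t).symm⟩⟩
    · exact .inr ⟨a, t, ht, .inl (w2_eq_weylMatrix a t).symm⟩
    · exact .inl ⟨b, a, h.ne, 0, t, .inr ht, .inr ⟨h, .inl (wpp_zero_left b a t).symm⟩⟩
  · rcases lt_trichotomy a b with h | rfl | h
    · exact .inl ⟨a, b, h.ne, 0, t, .inr ht, .inr ⟨h, .inr (wmm_zero_left a b t).symm⟩⟩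
    · exact .inr ⟨a, t, ht, .inr (wm2_eq_weylMatrix a t).symm⟩
    · exact .inl ⟨b, a, h.ne, t, 0, .inl ht, .inr ⟨h, .inr (wmm_zero_right b a t).symm⟩⟩
  · exact .inl ⟨b, a, (hi_injective.ne_iff.1 hkl).symm, 0, t, .inr ht,
      .inl (wpm_zero_left b a t).symm⟩

lemma exists_mem_closure_genU {u : Matrix (Fin (2 * n)) (Fin (2 * n)) K}
    (hu : u ∈ upperUnipotent (Fin (2 * n)) K) :
    ∃ U ∈ Subgroup.closure (genU n K),
      (U : Matrix _ _ K) = reindexAlgEquiv K K (halfReversal n) u :=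
  exists_mem_closure_val_eq _ (by
    rintro _ ⟨_, ⟨k, l, t, hkl, rfl⟩, rfl⟩
    rw [reindex_transvection]
    exact transvection_halfReversal_mem_genU hkl t) hu

lemma exists_mem_closure_genW {w : Matrix (Fin (2 * n)) (Fin (2 * n)) K}
    (hw : w ∈ weylSubmonoid (Fin (2 * n)) K) :
    ∃ W ∈ Subgroup.closure (genW n K),
      (W : Matrix _ _ K) = reindexAlgEquiv K K (halfReversal n) w :=
  exists_mem_closure_val_eq _ (by
    rintro _ ⟨_, ⟨k, l, t, hkl, ht, rfl⟩, rfl⟩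
    rw [reindex_weylMatrix]
    exact weylMatrix_mem_genW ((halfReversal n).injective.ne hkl) ht) hw

end RootElements

theorem statement17_general {n : ℕ} (K : Type) [RCLike K]
    (g : (Matrix (Fin (2 * n)) (Fin (2 * n)) K)ˣ)
    (hg : Matrix.det (g : Matrix (Fin (2 * n)) (Fin (2 * n)) K) = 1) :
    ∃ u₁ ∈ Subgroup.closure (genU n K), ∃ w ∈ Subgroup.closure (genW n K),
      ∃ u₂ ∈ Subgroup.closure (genU n K), g = u₁ * w * u₂ := by
  have hdet : ((reindexAlgEquiv K K (halfReversal n)).symm g).det = 1 := by simp [hg]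
  obtain ⟨u₁, hu₁, u₂, hu₂, τ, d, hM⟩ :=
    exists_mul_mul_eq_monomialMatrix (hdet ▸ one_ne_zero)
  have hw : monomialMatrix τ d ∈ weylSubmonoid _ K := by
    refine monomialMatrix_mem_weylSubmonoid τ ?_
    rw [← hM, det_mul, det_mul, det_eq_one_of_mem_upperUnipotent hu₁,
      det_eq_one_of_mem_upperUnipotent hu₂, hdet, one_mul, one_mul]
  obtain ⟨U₁, hU₁, hU₁ρ⟩ := exists_mem_closure_genU hu₁
  obtain ⟨W, hW, hWρ⟩ := exists_mem_closure_genW hw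
  obtain ⟨U₂, hU₂, hU₂ρ⟩ := exists_mem_closure_genU hu₂
  refine ⟨U₁⁻¹, inv_mem hU₁, W, hW, U₂⁻¹, inv_mem hU₂, ?_⟩
  rw [eq_mul_inv_iff_mul_eq, eq_inv_mul_iff_mul_eq]
  ext1
  rw [Units.val_mul, Units.val_mul, hU₁ρ, hU₂ρ, hWρ, ← hM, map_mul, map_mul,
    AlgEquiv.apply_symm_apply, Matrix.mul_assoc]

/-- every g ∈ SL(2n,K) can be written as g = u₁ · w · u₂ with
u₁, u₂ in the subgroup U⁺ generated by the positive-root unipotents and w in the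
subgroup W generated by the w's. -/
theorem statement17 {n : ℕ} (hn : 2 ≤ n) (K : Type) [RCLike K]
    (g : (Matrix (Fin (2 * n)) (Fin (2 * n)) K)ˣ)
    (hg : Matrix.det (g : Matrix (Fin (2 * n)) (Fin (2 * n)) K) = 1) :
    ∃ u₁ ∈ Subgroup.closure (genU n K), ∃ w ∈ Subgroup.closure (genW n K),
      ∃ u₂ ∈ Subgroup.closure (genU n K), g = u₁ * w * u₂ :=
  statement17_general K g hg

end
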